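/- (One-substep L²-stability of the Implicit Midpoint Rule substep) Let N ≥ 1, k > 0, b a nonzero real, and K > 0. Suppose real-valued V, Ṽ, Y, Ỹ ∈ S_N satisfy Ṽ = V + k b F((Ṽ + V)/2) and Ỹ = Y + k b F((Ỹ + Y)/2), and suppose ‖Ṽ + V‖_{1,∞} ≤ K, where ‖w‖_{1,∞} = |w|_∞ + |∂_x w|_∞. Then there exists a constant C depending only on K and |b| (not on k or N) such that ‖Ṽ − Ỹ‖ − ‖V − Y‖ ≤ C k ( ‖Ṽ − Ỹ‖ + ‖V − Y‖ ); in particular, there exist k₀ > 0 and C′ depending only on K and |b| such that for k ≤ k₀ one has ‖Ṽ − Ỹ‖ ≤ (1 + C′ k) ‖V − Y‖. -/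

import Mathlib

/-!
Write `θ = Ṽ - Ỹ`, `η = V - Y`, and `p`, `q` for the midpoints `(Ṽ + V)/2`, `(Ỹ + Y)/2`, so that
`p - q = (θ + η)/2`. Subtracting the two midpoint equations and pairing with `θ + η` gives
`‖θ‖² - ‖η‖² = 2kb (F p - F q, p - q)`. In this pairing `∂ₓ³` is skew-adjoint, `P_N` is invisible
against `p - q ∈ S_N`, and integrating the Burgers term by parts leaves
`(F p - F q, p - q) = -½ ∫ ∂ₓp (p - q)²`. Since `|∂ₓp| ≤ K/2`, this yields
`‖θ‖² - ‖η‖² ≤ C k (‖θ‖² + ‖η‖²)` with `C = |b| K / 4`; dividing by `‖θ‖ + ‖η‖` gives the first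
claim, and for `C k ≤ 1/2` it rearranges to `‖θ‖ ≤ (1 + 4 C k) ‖η‖`.
-/

noncomputable section

namespace KdVSpec

/-- The L² inner product of two real-valued functions on `(-π, π)`. -/
def L2inner (u v : ℝ → ℝ) : ℝ := ∫ x in (-Real.pi)..Real.pi, u x * v x

/-- The L² norm of a real-valued function on `(-π, π)`. -/
def L2norm (u : ℝ → ℝ) : ℝ := Real.sqrt (∫ x in (-Real.pi)..Real.pi, (u x)^2)

/-- The sup norm of a real-valued function on `[-π, π]`. -/
def LinfNorm (u : ℝ → ℝ) : ℝ := sSup ((fun x => |u x|) '' Set.Icc (-Real.pi) Real.pi)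

/-- The `W^{1,∞}` norm `‖v‖_{1,∞} = |v|_∞ + |∂ₓ v|_∞`. -/
def norm1inf (u : ℝ → ℝ) : ℝ := LinfNorm u + LinfNorm (deriv u)

/-- The `k`-th Fourier coefficient of a (2π-periodic) function on `(-π,π)`. -/
def fCoeff (u : ℝ → ℝ) (k : ℤ) : ℂ :=
  (1 / (2 * Real.pi)) *
    ∫ x in (-Real.pi)..Real.pi, Complex.exp (-(Complex.I * (k : ℂ) * (x : ℂ))) * (u x : ℂ)

/-- The periodic Sobolev norm of order `μ`. -/
def sobNorm (μ : ℝ) (u : ℝ → ℝ) : ℝ :=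
  Real.sqrt (∑' k : ℤ, (1 + (k : ℝ)^2) ^ μ * ‖fCoeff u k‖^2)

/-- `v` is a (real-valued) trigonometric polynomial of degree at most `N`,
i.e. a member of `S_N = span{e^{ikx} : |k| ≤ N}`. -/
def InSN (N : ℕ) (v : ℝ → ℝ) : Prop :=
  ∃ c : ℤ → ℂ, ∀ x : ℝ,
    (v x : ℂ) = ∑ k ∈ Finset.Icc (-(N : ℤ)) (N : ℤ), c k * Complex.exp (Complex.I * (k : ℂ) * (x : ℂ))

/-- The orthogonal L²-projection onto `S_N`, `P_N v = Σ_{|k|≤N} v̂(k) e^{ikx}`. -/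
def PN (N : ℕ) (u : ℝ → ℝ) : ℝ → ℝ := fun x =>
  (∑ k ∈ Finset.Icc (-(N : ℤ)) (N : ℤ), fCoeff u k * Complex.exp (Complex.I * (k : ℂ) * (x : ℂ))).re

/-- Spatial derivative `∂ₓ`. -/
def dx (u : ℝ → ℝ) : ℝ → ℝ := deriv u

/-- Third spatial derivative `∂ₓ³`. -/
def dx3 (u : ℝ → ℝ) : ℝ → ℝ := deriv (deriv (deriv u))

/-- The map `F(v) = -∂ₓ³ v - P_N(v ∂ₓ v)` on `S_N`. -/
def Fmap (N : ℕ) (v : ℝ → ℝ) : ℝ → ℝ := fun x =>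
  -(dx3 v x) - PN N (fun y => v y * dx v y) x

/-- `u` solves the periodic KdV equation `u_t + u u_x + u_{xxx} = 0` on the time set `I`
(with 2π-periodicity in space). -/
def IsKdVSolution (u : ℝ → ℝ → ℝ) (I : Set ℝ) : Prop :=
  (∀ t ∈ I, ∀ x : ℝ, u t (x + 2 * Real.pi) = u t x) ∧
  (∀ t ∈ I, ∀ x : ℝ,
    deriv (fun s => u s x) t + u t x * dx (u t) x + dx3 (u t) x = 0)

/-- `w` is the semidiscrete Fourier–Galerkin approximation (with initial value `P_N u₀`)
on the time set `I`: `w(t) ∈ S_N`, `w` is differentiable in time, `w(0) = P_N u₀` and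
`(∂_t w + w ∂ₓ w + ∂ₓ³ w, χ) = 0` for every `χ ∈ S_N`. -/
def SemidiscreteOn (N : ℕ) (u0 : ℝ → ℝ) (w : ℝ → ℝ → ℝ) (I : Set ℝ) : Prop :=
  (∀ t ∈ I, InSN N (w t)) ∧
  (∀ x : ℝ, ∀ t ∈ I, DifferentiableAt ℝ (fun s => w s x) t) ∧
  (∀ x : ℝ, w 0 x = PN N u0 x) ∧
  (∀ t ∈ I, ∀ χ : ℝ → ℝ, InSN N χ →
    L2inner (fun x => deriv (fun s => w s x) t + w t x * dx (w t) x + dx3 (w t) x) χ = 0)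

section TrigPoly

lemma cexp_I_mul_int_mul_neg_pi (k : ℤ) :
    Complex.exp (Complex.I * k * ((-Real.pi : ℝ) : ℂ)) = Complex.exp (Complex.I * k * Real.pi) :=
  Complex.exp_eq_exp_iff_exists_int.mpr ⟨-k, by push_cast; ring⟩

lemma hasDerivAt_cexp_I_mul_int (k : ℤ) (x : ℝ) :
    HasDerivAt (fun y : ℝ => Complex.exp (Complex.I * k * y))
      (Complex.I * k * Complex.exp (Complex.I * k * x)) x := by
  simpa [mul_comm] using ((hasDerivAt_id x).ofReal_comp.const_mul (Complex.I * (k : ℂ))).cexp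

lemma HasDerivAt.of_ofReal {v : ℝ → ℝ} {z : ℂ} {x : ℝ}
    (h : HasDerivAt (fun y => (v y : ℂ)) z x) : HasDerivAt v z.re x ∧ z.im = 0 := by
  have hre : HasDerivAt (fun y => ((v y : ℂ)).re) z.re x :=
    Complex.reCLM.hasFDerivAt.comp_hasDerivAt x h
  have him : HasDerivAt (fun y => ((v y : ℂ)).im) z.im x :=
    Complex.imCLM.hasFDerivAt.comp_hasDerivAt x h
  simp only [Complex.ofReal_re, Complex.ofReal_im] at hre him
  exact ⟨hre, him.unique (hasDerivAt_const x 0)⟩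

-- The sums in `InSN` and `PN` are literally `trigPoly`, so both unfold to it.
def trigPoly (N : ℕ) (c : ℤ → ℂ) (x : ℝ) : ℂ :=
  ∑ k ∈ Finset.Icc (-(N : ℤ)) (N : ℤ), c k * Complex.exp (Complex.I * (k : ℂ) * (x : ℂ))

lemma hasDerivAt_trigPoly (N : ℕ) (c : ℤ → ℂ) (x : ℝ) :
    HasDerivAt (trigPoly N c) (trigPoly N (fun k => Complex.I * k * c k) x) x := by
  refine HasDerivAt.fun_sum fun k _ => ?_
  simpa [mul_comm, mul_assoc, mul_left_comm] using (hasDerivAt_cexp_I_mul_int k x).const_mul (c k)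

lemma continuous_trigPoly (N : ℕ) (c : ℤ → ℂ) : Continuous (trigPoly N c) :=
  continuous_iff_continuousAt.mpr fun x => (hasDerivAt_trigPoly N c x).continuousAt

lemma trigPoly_neg_pi (N : ℕ) (c : ℤ → ℂ) : trigPoly N c (-Real.pi) = trigPoly N c Real.pi := by
  simp only [trigPoly, cexp_I_mul_int_mul_neg_pi]

lemma hasDerivAt_of_ofReal_eq_trigPoly {N : ℕ} {v : ℝ → ℝ} {c : ℤ → ℂ}
    (hc : ∀ x, (v x : ℂ) = trigPoly N c x) (x : ℝ) :
    HasDerivAt v (deriv v x) x ∧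
      ((deriv v x : ℝ) : ℂ) = trigPoly N (fun k => Complex.I * k * c k) x := by
  obtain ⟨hv, him⟩ :=
    HasDerivAt.of_ofReal ((hasDerivAt_trigPoly N c x).congr_of_eventuallyEq (.of_forall hc))
  rw [hv.deriv]
  exact ⟨hv, Complex.ext (by simp) (by simp [him])⟩

end TrigPoly

namespace InSN

variable {N : ℕ} {u v : ℝ → ℝ}

lemma deriv_inSN (hv : InSN N v) : InSN N (deriv v) := by
  obtain ⟨c, hc⟩ := hv
  exact ⟨_, fun x => (hasDerivAt_of_ofReal_eq_trigPoly hc x).2⟩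

lemma differentiable (hv : InSN N v) : Differentiable ℝ v := by
  obtain ⟨c, hc⟩ := hv
  exact fun x => (hasDerivAt_of_ofReal_eq_trigPoly hc x).1.differentiableAt

lemma continuous (hv : InSN N v) : Continuous v := hv.differentiable.continuous

lemma apply_neg_pi (hv : InSN N v) : v (-Real.pi) = v Real.pi := by
  obtain ⟨c, hc⟩ := hv
  exact_mod_cast (hc _).trans ((trigPoly_neg_pi N c).trans (hc _).symm)

lemma add (hu : InSN N u) (hv : InSN N v) : InSN N (fun x => u x + v x) := by
  obtain ⟨c, hc⟩ := hu
  obtain ⟨d, hd⟩ := hv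
  refine ⟨c + d, fun x => ?_⟩
  simp [hc, hd, add_mul, Finset.sum_add_distrib]

lemma sub (hu : InSN N u) (hv : InSN N v) : InSN N (fun x => u x - v x) := by
  obtain ⟨c, hc⟩ := hu
  obtain ⟨d, hd⟩ := hv
  refine ⟨c - d, fun x => ?_⟩
  simp [hc, hd, sub_mul, Finset.sum_sub_distrib]

lemma div_const (hv : InSN N v) (r : ℝ) : InSN N (fun x => v x / r) := by
  obtain ⟨c, hc⟩ := hv
  refine ⟨fun k => c k / r, fun x => ?_⟩
  simp [hc, div_mul_eq_mul_div, Finset.sum_div]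

lemma deriv_sub (hu : InSN N u) (hv : InSN N v) :
    deriv (fun x => u x - v x) = fun x => deriv u x - deriv v x :=
  funext fun x => _root_.deriv_sub (hu.differentiable x) (hv.differentiable x)

lemma dx3_sub (hu : InSN N u) (hv : InSN N v) :
    dx3 (fun x => u x - v x) = fun x => dx3 u x - dx3 v x := by
  simp only [dx3, hu.deriv_sub hv, hu.deriv_inSN.deriv_sub hv.deriv_inSN,
    hu.deriv_inSN.deriv_inSN.deriv_sub hv.deriv_inSN.deriv_inSN]

end InSN

section Projection

lemma integral_cexp_I_mul_int (n : ℤ) :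
    ∫ x in (-Real.pi)..Real.pi, Complex.exp (Complex.I * n * x)
      = if n = 0 then 2 * (Real.pi : ℂ) else 0 := by
  split_ifs with hn
  · simp [hn]
    ring
  · have hc : Complex.I * n ≠ 0 := by simp [hn]
    rw [integral_exp_mul_complex hc, cexp_I_mul_int_mul_neg_pi, sub_self, zero_div]

lemma neg_mem_Icc_neg_self {N k : ℤ} (hk : k ∈ Finset.Icc (-N) N) : -k ∈ Finset.Icc (-N) N := by
  simp only [Finset.mem_Icc] at hk ⊢
  omega

lemma integral_cexp_mul_trigPoly {N : ℕ} (d : ℤ → ℂ) {k : ℤ}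
    (hk : k ∈ Finset.Icc (-(N : ℤ)) N) :
    ∫ x in (-Real.pi)..Real.pi, Complex.exp (Complex.I * k * x) * trigPoly N d x
      = 2 * Real.pi * d (-k) := by
  have hexp : ∀ x : ℝ, Complex.exp (Complex.I * k * x) * trigPoly N d x
      = ∑ j ∈ Finset.Icc (-(N : ℤ)) N, d j * Complex.exp (Complex.I * ((k + j : ℤ) : ℂ) * x) := by
    intro x
    simp only [trigPoly, Finset.mul_sum]
    refine Finset.sum_congr rfl fun j _ => ?_
    rw [mul_left_comm, ← Complex.exp_add]
    push_cast
    ring_nf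
  simp_rw [hexp]
  rw [intervalIntegral.integral_finsetSum
    (f := fun j (x : ℝ) => d j * Complex.exp (Complex.I * ((k + j : ℤ) : ℂ) * x))
    fun j _ => (by fun_prop : Continuous _).intervalIntegrable _ _]
  simp_rw [intervalIntegral.integral_const_mul, integral_cexp_I_mul_int]
  rw [Finset.sum_eq_single (-k) (fun j _ hj => by rw [if_neg (by omega), mul_zero])
    (fun h => absurd (neg_mem_Icc_neg_self hk) h)]
  simp [mul_comm]

lemma integral_cexp_mul_eq_fCoeff (g : ℝ → ℝ) (j : ℤ) :
    ∫ x in (-Real.pi)..Real.pi, Complex.exp (Complex.I * j * x) * g x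
      = 2 * Real.pi * fCoeff g (-j) := by
  simp only [fCoeff, Int.cast_neg, mul_neg, neg_mul, neg_neg]
  field_simp

lemma integral_re_trigPoly_mul {N : ℕ} (c : ℤ → ℂ) {f : ℝ → ℝ} (hf : Continuous f) :
    ∫ x in (-Real.pi)..Real.pi, (trigPoly N c x).re * f x
      = (∑ k ∈ Finset.Icc (-(N : ℤ)) N,
          c k * ∫ x in (-Real.pi)..Real.pi, Complex.exp (Complex.I * k * x) * f x).re := by
  have hint : ∀ k : ℤ, IntervalIntegrable
      (fun x : ℝ => c k * (Complex.exp (Complex.I * k * x) * f x)) MeasureTheory.volume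
        (-Real.pi) Real.pi := fun k => (by fun_prop : Continuous _).intervalIntegrable _ _
  have hsum : IntervalIntegrable (fun x : ℝ => ∑ k ∈ Finset.Icc (-(N : ℤ)) N,
      c k * (Complex.exp (Complex.I * k * x) * f x)) MeasureTheory.volume (-Real.pi) Real.pi :=
    (by fun_prop : Continuous _).intervalIntegrable _ _
  simp_rw [← intervalIntegral.integral_const_mul]
  rw [← intervalIntegral.integral_finsetSum fun k _ => hint k]
  refine (intervalIntegral.integral_congr fun x _ => ?_).trans
    (intervalIntegral.intervalIntegral_re hsum)
  rw [← Complex.re_mul_ofReal, trigPoly, Finset.sum_mul]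
  simp_rw [mul_assoc]
  rfl

lemma L2inner_PN_left {N : ℕ} {g χ : ℝ → ℝ} (hg : Continuous g) (hχ : InSN N χ) :
    L2inner (PN N g) χ = L2inner g χ := by
  have hχc := hχ.continuous
  obtain ⟨d, hd⟩ := hχ
  have hχd : ∀ x, χ x = (trigPoly N d x).re := fun x => by rw [trigPoly, ← hd x, Complex.ofReal_re]
  have hPN : L2inner (PN N g) χ
      = (∑ k ∈ Finset.Icc (-(N : ℤ)) N, fCoeff g k * (2 * Real.pi * d (-k))).re := by
    change ∫ x in (-Real.pi)..Real.pi, (trigPoly N (fCoeff g) x).re * χ x = _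
    rw [integral_re_trigPoly_mul _ hχc]
    congr 1
    refine Finset.sum_congr rfl fun k hk => ?_
    rw [← integral_cexp_mul_trigPoly d hk]
    simp only [hd]
    rfl
  have hg : L2inner g χ
      = (∑ j ∈ Finset.Icc (-(N : ℤ)) N, d j * (2 * Real.pi * fCoeff g (-j))).re := by
    simp_rw [← integral_cexp_mul_eq_fCoeff, ← integral_re_trigPoly_mul _ hg, ← hχd]
    exact intervalIntegral.integral_congr fun x _ => mul_comm _ _
  rw [hPN, hg]
  congr 1
  refine Finset.sum_nbij' (fun k => -k) (fun k => -k) (fun k hk => neg_mem_Icc_neg_self hk)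
    (fun k hk => neg_mem_Icc_neg_self hk) (fun k _ => neg_neg k) (fun k _ => neg_neg k)
    fun k _ => ?_
  simp only [neg_neg]
  ring

lemma continuous_PN (N : ℕ) (g : ℝ → ℝ) : Continuous (PN N g) :=
  Complex.continuous_re.comp (continuous_trigPoly N (fCoeff g))

end Projection

section EnergyIdentity

variable {N : ℕ}

lemma integral_mul_deriv_eq_neg_of_periodic {u w u' w' : ℝ → ℝ}
    (hu : ∀ x, HasDerivAt u (u' x) x) (hw : ∀ x, HasDerivAt w (w' x) x)
    (hu' : Continuous u') (hw' : Continuous w')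
    (hper : u (-Real.pi) * w (-Real.pi) = u Real.pi * w Real.pi) :
    ∫ x in (-Real.pi)..Real.pi, u x * w' x = -∫ x in (-Real.pi)..Real.pi, u' x * w x := by
  rw [intervalIntegral.integral_mul_deriv_eq_deriv_mul (fun x _ => hu x) (fun x _ => hw x)
    (hu'.intervalIntegrable _ _) (hw'.intervalIntegrable _ _), hper]
  ring

lemma integral_pow_mul_deriv_eq_zero {f : ℝ → ℝ} (hf : InSN N f) (n : ℕ) :
    ∫ x in (-Real.pi)..Real.pi, f x ^ n * deriv f x = 0 := by
  have hF : ∀ x, HasDerivAt (fun y => f y ^ (n + 1) / (n + 1)) (f x ^ n * deriv f x) x := by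
    intro x
    refine (((hf.differentiable x).hasDerivAt.fun_pow (n + 1)).div_const _).congr_deriv ?_
    rw [Nat.add_sub_cancel]
    field_simp
    push_cast
    ring
  rw [intervalIntegral.integral_eq_sub_of_hasDerivAt (fun x _ => hF x)
    (((hf.continuous.pow n).mul hf.deriv_inSN.continuous).intervalIntegrable _ _),
    hf.apply_neg_pi, sub_self]

lemma integral_dx3_mul_self_eq_zero {e : ℝ → ℝ} (he : InSN N e) :
    ∫ x in (-Real.pi)..Real.pi, dx3 e x * e x = 0 := by
  have he1 := he.deriv_inSN
  have he2 := he1.deriv_inSN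
  calc ∫ x in (-Real.pi)..Real.pi, dx3 e x * e x
      = ∫ x in (-Real.pi)..Real.pi, e x * deriv (deriv (deriv e)) x := by simp only [dx3, mul_comm]
    _ = -∫ x in (-Real.pi)..Real.pi, deriv e x ^ 1 * deriv (deriv e) x := by
      simpa using integral_mul_deriv_eq_neg_of_periodic (fun x => (he.differentiable x).hasDerivAt)
        (fun x => (he2.differentiable x).hasDerivAt) he1.continuous he2.deriv_inSN.continuous
        (by rw [he.apply_neg_pi, he2.apply_neg_pi])
    _ = 0 := by rw [integral_pow_mul_deriv_eq_zero he1, neg_zero]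

lemma integral_mul_mul_deriv {p e : ℝ → ℝ} (hp : InSN N p) (he : InSN N e) :
    ∫ x in (-Real.pi)..Real.pi, p x * (e x * deriv e x)
      = -(1 / 2) * ∫ x in (-Real.pi)..Real.pi, deriv p x * e x ^ 2 := by
  have hw : ∀ x, HasDerivAt (fun y => e y ^ 2 / 2) (e x * deriv e x) x := by
    intro x
    refine (((he.differentiable x).hasDerivAt.fun_pow 2).div_const 2).congr_deriv ?_
    push_cast
    ring
  rw [integral_mul_deriv_eq_neg_of_periodic (fun x => (hp.differentiable x).hasDerivAt) hw
    hp.deriv_inSN.continuous (he.continuous.mul he.deriv_inSN.continuous)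
    (by rw [hp.apply_neg_pi, he.apply_neg_pi]), ← intervalIntegral.integral_const_mul]
  rw [← intervalIntegral.integral_neg]
  exact intervalIntegral.integral_congr fun x _ => by ring

lemma L2inner_mul_dx_sub_L2inner_mul_dx {p q : ℝ → ℝ} (hp : InSN N p) (hq : InSN N q) :
    L2inner (fun y => p y * dx p y) (fun x => p x - q x)
        - L2inner (fun y => q y * dx q y) (fun x => p x - q x)
      = 1 / 2 * ∫ x in (-Real.pi)..Real.pi, deriv p x * (p x - q x) ^ 2 := by
  have he := hp.sub hq
  set e := fun x => p x - q x with he_def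
  have hpc := hp.continuous
  have hqc := hq.continuous
  have hp' := hp.deriv_inSN.continuous
  have hq' := hq.deriv_inSN.continuous
  have hec := he.continuous
  have he' := he.deriv_inSN.continuous
  have hnl : ∀ x, p x * deriv p x * e x - q x * deriv q x * e x
      = p x * (e x * deriv e x) + deriv p x * e x ^ 2 - e x ^ 2 * deriv e x := by
    intro x
    simp only [he_def, hp.deriv_sub hq]
    ring
  calc L2inner (fun y => p y * dx p y) e - L2inner (fun y => q y * dx q y) e
    _ = (∫ x in (-Real.pi)..Real.pi, p x * (e x * deriv e x))
        + (∫ x in (-Real.pi)..Real.pi, deriv p x * e x ^ 2)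
        - ∫ x in (-Real.pi)..Real.pi, e x ^ 2 * deriv e x := by
      simp only [L2inner, dx]
      rw [← intervalIntegral.integral_sub, intervalIntegral.integral_congr fun x _ => hnl x,
        intervalIntegral.integral_sub, intervalIntegral.integral_add]
      all_goals exact (by fun_prop : Continuous _).intervalIntegrable _ _
    _ = _ := by
      rw [integral_mul_mul_deriv hp he, integral_pow_mul_deriv_eq_zero he 2]
      ring

lemma integral_Fmap_sub_mul_sub {p q : ℝ → ℝ} (hp : InSN N p) (hq : InSN N q) :
    ∫ x in (-Real.pi)..Real.pi, (Fmap N p x - Fmap N q x) * (p x - q x)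
      = -(1 / 2) * ∫ x in (-Real.pi)..Real.pi, deriv p x * (p x - q x) ^ 2 := by
  have he := hp.sub hq
  have hpq := L2inner_mul_dx_sub_L2inner_mul_dx hp hq
  set e := fun x => p x - q x with he_def
  have hec := he.continuous
  have he3 : Continuous (dx3 e) := he.deriv_inSN.deriv_inSN.deriv_inSN.continuous
  have hPp := continuous_PN N (fun y => p y * dx p y)
  have hPq := continuous_PN N (fun y => q y * dx q y)
  have hF : ∀ x, (Fmap N p x - Fmap N q x) * e x = -(dx3 e x * e x)
      - (PN N (fun y => p y * dx p y) x * e x - PN N (fun y => q y * dx q y) x * e x) := by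
    intro x
    simp only [Fmap, he_def, hp.dx3_sub hq]
    ring
  calc (∫ x in (-Real.pi)..Real.pi, (Fmap N p x - Fmap N q x) * e x)
    _ = -(∫ x in (-Real.pi)..Real.pi, dx3 e x * e x)
        - (L2inner (PN N (fun y => p y * dx p y)) e
          - L2inner (PN N (fun y => q y * dx q y)) e) := by
      rw [intervalIntegral.integral_congr fun x _ => hF x, intervalIntegral.integral_sub,
        intervalIntegral.integral_neg, intervalIntegral.integral_sub]
      all_goals first | rfl | exact (by fun_prop : Continuous _).intervalIntegrable _ _
    _ = _ := by
      rw [integral_dx3_mul_self_eq_zero he,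
        L2inner_PN_left (g := fun y => p y * dx p y)
          (hp.continuous.mul hp.deriv_inSN.continuous) he,
        L2inner_PN_left (g := fun y => q y * dx q y)
          (hq.continuous.mul hq.deriv_inSN.continuous) he, hpq]
      ring

end EnergyIdentity

section Estimates

lemma abs_le_LinfNorm {u : ℝ → ℝ} (hu : Continuous u) {x : ℝ}
    (hx : x ∈ Set.Icc (-Real.pi) Real.pi) : |u x| ≤ LinfNorm u :=
  le_csSup (isCompact_Icc.bddAbove_image hu.abs.continuousOn) ⟨x, hx, rfl⟩

lemma LinfNorm_nonneg {u : ℝ → ℝ} (hu : Continuous u) : 0 ≤ LinfNorm u :=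
  (abs_nonneg _).trans (abs_le_LinfNorm hu ⟨by linarith [Real.pi_pos], Real.pi_pos.le⟩)

lemma abs_deriv_le_norm1inf {u : ℝ → ℝ} (hu : Continuous u) (hu' : Continuous (deriv u)) {x : ℝ}
    (hx : x ∈ Set.Icc (-Real.pi) Real.pi) : |deriv u x| ≤ norm1inf u :=
  (abs_le_LinfNorm hu' hx).trans (le_add_of_nonneg_left (LinfNorm_nonneg hu))

lemma L2norm_nonneg (u : ℝ → ℝ) : 0 ≤ L2norm u := Real.sqrt_nonneg _

lemma sq_L2norm (u : ℝ → ℝ) : L2norm u ^ 2 = ∫ x in (-Real.pi)..Real.pi, u x ^ 2 :=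
  Real.sq_sqrt (intervalIntegral.integral_nonneg (by linarith [Real.pi_pos]) fun _ _ => sq_nonneg _)

lemma abs_integral_mul_sq_le {a b M : ℝ} (hab : a ≤ b) {f g : ℝ → ℝ} (hf : Continuous f)
    (hg : Continuous g) (hfM : ∀ x ∈ Set.Icc a b, |f x| ≤ M) :
    |∫ x in a..b, f x * g x ^ 2| ≤ M * ∫ x in a..b, g x ^ 2 := by
  rw [← intervalIntegral.integral_const_mul]
  refine (intervalIntegral.abs_integral_le_integral_abs hab).trans
    (intervalIntegral.integral_mono_on hab ((by fun_prop : Continuous _).intervalIntegrable _ _)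
      ((by fun_prop : Continuous _).intervalIntegrable _ _) fun x hx => ?_)
  rw [abs_mul, abs_of_nonneg (sq_nonneg (g x))]
  exact mul_le_mul_of_nonneg_right (hfM x hx) (sq_nonneg _)

lemma integral_half_add_sq_le {a b : ℝ} (hab : a ≤ b) {f g : ℝ → ℝ} (hf : Continuous f)
    (hg : Continuous g) :
    ∫ x in a..b, ((f x + g x) / 2) ^ 2 ≤ ((∫ x in a..b, f x ^ 2) + ∫ x in a..b, g x ^ 2) / 2 := by
  rw [← intervalIntegral.integral_add ((hf.fun_pow 2).intervalIntegrable _ _)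
    ((hg.fun_pow 2).intervalIntegrable _ _), ← intervalIntegral.integral_div]
  exact intervalIntegral.integral_mono_on hab ((by fun_prop : Continuous _).intervalIntegrable _ _)
    ((by fun_prop : Continuous _).intervalIntegrable _ _)
    fun x _ => by nlinarith [sq_nonneg (f x - g x)]

lemma sub_le_mul_add_of_sq_sub_sq_le {A B t : ℝ} (hA : 0 ≤ A) (hB : 0 ≤ B) (ht : 0 ≤ t)
    (h : A ^ 2 - B ^ 2 ≤ t * (A ^ 2 + B ^ 2)) : A - B ≤ t * (A + B) := by
  rcases (add_nonneg hA hB).eq_or_lt with hAB | hAB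
  · nlinarith
  · refine le_of_mul_le_mul_right ?_ hAB
    nlinarith [mul_nonneg ht (mul_nonneg hA hB)]

lemma le_one_add_four_mul_of_sub_le {A B t : ℝ} (hB : 0 ≤ B) (ht : 0 ≤ t) (ht2 : t ≤ 1 / 2)
    (h : A - B ≤ t * (A + B)) : A ≤ (1 + 4 * t) * B := by
  nlinarith [mul_nonneg (mul_nonneg ht (by linarith : 0 ≤ 1 - 2 * t)) hB]

end Estimates

section MidpointStep

variable {N : ℕ} {k b : ℝ} {V Vt Y Yt : ℝ → ℝ}

lemma integral_sq_sub_integral_sq_of_midpoint_step (hV : InSN N V) (hVt : InSN N Vt)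
    (hY : InSN N Y) (hYt : InSN N Yt)
    (hVstep : ∀ x, Vt x = V x + k * b * Fmap N (fun y => (Vt y + V y) / 2) x)
    (hYstep : ∀ x, Yt x = Y x + k * b * Fmap N (fun y => (Yt y + Y y) / 2) x) :
    (∫ x in (-Real.pi)..Real.pi, (Vt x - Yt x) ^ 2) - ∫ x in (-Real.pi)..Real.pi, (V x - Y x) ^ 2
      = -(k * b) * ∫ x in (-Real.pi)..Real.pi,
          deriv (fun y => (Vt y + V y) / 2) x * ((Vt x + V x) / 2 - (Yt x + Y x) / 2) ^ 2 := by
  have hp := (hVt.add hV).div_const 2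
  have hq := (hYt.add hY).div_const 2
  have hθ := (hVt.sub hYt).continuous
  have hη := (hV.sub hY).continuous
  rw [← intervalIntegral.integral_sub ((hθ.fun_pow 2).intervalIntegrable _ _)
      ((hη.fun_pow 2).intervalIntegrable _ _),
    intervalIntegral.integral_congr (g := fun x => 2 * (k * b) *
      ((Fmap N (fun y => (Vt y + V y) / 2) x - Fmap N (fun y => (Yt y + Y y) / 2) x) *
        ((Vt x + V x) / 2 - (Yt x + Y x) / 2)))
      fun x _ => by linear_combination (Vt x - Yt x + (V x - Y x)) * (hVstep x - hYstep x),
    intervalIntegral.integral_const_mul, integral_Fmap_sub_mul_sub hp hq]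
  ring

lemma sq_L2norm_sub_le_of_midpoint_step {K : ℝ} (hk : 0 ≤ k) (hV : InSN N V) (hVt : InSN N Vt)
    (hY : InSN N Y) (hYt : InSN N Yt)
    (hVstep : ∀ x, Vt x = V x + k * b * Fmap N (fun y => (Vt y + V y) / 2) x)
    (hYstep : ∀ x, Yt x = Y x + k * b * Fmap N (fun y => (Yt y + Y y) / 2) x)
    (hK : norm1inf (fun x => Vt x + V x) ≤ K) :
    L2norm (fun x => Vt x - Yt x) ^ 2 - L2norm (fun x => V x - Y x) ^ 2
      ≤ |b| * K / 4 * k *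
          (L2norm (fun x => Vt x - Yt x) ^ 2 + L2norm (fun x => V x - Y x) ^ 2) := by
  have hu := hVt.add hV
  have hp := hu.div_const 2
  have hq := (hYt.add hY).div_const 2
  have hpi : -Real.pi ≤ Real.pi := by linarith [Real.pi_pos]
  have hderiv : ∀ x ∈ Set.Icc (-Real.pi) Real.pi,
      |deriv (fun y => (Vt y + V y) / 2) x| ≤ K / 2 := by
    intro x hx
    rw [deriv_div_const, abs_div, abs_two]
    linarith [abs_deriv_le_norm1inf hu.continuous hu.deriv_inSN.continuous hx]
  have hX := abs_integral_mul_sq_le hpi hp.deriv_inSN.continuous (hp.sub hq).continuous hderiv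
  have hmid : ∫ x in (-Real.pi)..Real.pi, ((Vt x + V x) / 2 - (Yt x + Y x) / 2) ^ 2
      ≤ ((∫ x in (-Real.pi)..Real.pi, (Vt x - Yt x) ^ 2)
        + ∫ x in (-Real.pi)..Real.pi, (V x - Y x) ^ 2) / 2 := by
    refine le_of_eq_of_le (intervalIntegral.integral_congr fun x _ => ?_)
      (integral_half_add_sq_le hpi (hVt.sub hYt).continuous (hV.sub hY).continuous)
    ring
  have hK0 : 0 ≤ K / 2 := (abs_nonneg _).trans (hderiv 0 ⟨by linarith, Real.pi_pos.le⟩)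
  rw [sq_L2norm, sq_L2norm,
    integral_sq_sub_integral_sq_of_midpoint_step hV hVt hY hYt hVstep hYstep]
  set X := ∫ x in (-Real.pi)..Real.pi,
    deriv (fun y => (Vt y + V y) / 2) x * ((Vt x + V x) / 2 - (Yt x + Y x) / 2) ^ 2
  calc -(k * b) * X = k * -(b * X) := by ring
    _ ≤ k * (|b| * |X|) := by rw [← abs_mul]; exact mul_le_mul_of_nonneg_left (neg_le_abs _) hk
    _ ≤ k * (|b| * (K / 2 * (((∫ x in (-Real.pi)..Real.pi, (Vt x - Yt x) ^ 2)
        + ∫ x in (-Real.pi)..Real.pi, (V x - Y x) ^ 2) / 2))) := by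
      gcongr
      exact hX.trans (mul_le_mul_of_nonneg_left hmid hK0)
    _ = _ := by ring

end MidpointStep

theorem IMR_substep_stability_general
    (b : ℝ) (K : ℝ) (hK : 0 < K) :
    ∃ C : ℝ, ∃ k₀ : ℝ, 0 < k₀ ∧ ∃ C' : ℝ,
      ∀ N : ℕ, 1 ≤ N → ∀ k : ℝ, 0 < k →
      ∀ V Vt Y Yt : ℝ → ℝ,
        InSN N V → InSN N Vt → InSN N Y → InSN N Yt →
        (∀ x : ℝ, Vt x = V x + k * b * Fmap N (fun y => (Vt y + V y) / 2) x) →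
        (∀ x : ℝ, Yt x = Y x + k * b * Fmap N (fun y => (Yt y + Y y) / 2) x) →
        norm1inf (fun x => Vt x + V x) ≤ K →
        (L2norm (fun x => Vt x - Yt x) - L2norm (fun x => V x - Y x)
            ≤ C * k * (L2norm (fun x => Vt x - Yt x) + L2norm (fun x => V x - Y x))) ∧
        (k ≤ k₀ →
          L2norm (fun x => Vt x - Yt x) ≤ (1 + C' * k) * L2norm (fun x => V x - Y x)) := by
  set C := |b| * K / 4
  have hC : 0 ≤ C := by positivity
  refine ⟨C, 1 / (2 * C + 1), by positivity, 4 * C,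
    fun N _ k hk V Vt Y Yt hV hVt hY hYt hVstep hYstep hnorm => ?_⟩
  have hCk : 0 ≤ C * k := mul_nonneg hC hk.le
  have hstep := sub_le_mul_add_of_sq_sub_sq_le (L2norm_nonneg _) (L2norm_nonneg _) hCk
    (sq_L2norm_sub_le_of_midpoint_step hk.le hV hVt hY hYt hVstep hYstep hnorm)
  refine ⟨hstep, fun hk₀ => ?_⟩
  have hCk₀ : C * k ≤ 1 / 2 :=
    calc C * k ≤ C * (1 / (2 * C + 1)) := mul_le_mul_of_nonneg_left hk₀ hC
      _ ≤ 1 / 2 := by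
        rw [mul_one_div, div_le_iff₀ (by positivity)]
        linarith
  simpa only [mul_assoc] using le_one_add_four_mul_of_sub_le (L2norm_nonneg _) hCk hCk₀ hstep

/-- one-substep L²-stability of the Implicit Midpoint Rule substep. -/
theorem IMR_substep_stability
    (b : ℝ) (hb : b ≠ 0) (K : ℝ) (hK : 0 < K) :
    ∃ C : ℝ, ∃ k₀ : ℝ, 0 < k₀ ∧ ∃ C' : ℝ,
      ∀ N : ℕ, 1 ≤ N → ∀ k : ℝ, 0 < k →
      ∀ V Vt Y Yt : ℝ → ℝ,
        InSN N V → InSN N Vt → InSN N Y → InSN N Yt →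
        (∀ x : ℝ, Vt x = V x + k * b * Fmap N (fun y => (Vt y + V y) / 2) x) →
        (∀ x : ℝ, Yt x = Y x + k * b * Fmap N (fun y => (Yt y + Y y) / 2) x) →
        norm1inf (fun x => Vt x + V x) ≤ K →
        (L2norm (fun x => Vt x - Yt x) - L2norm (fun x => V x - Y x)
            ≤ C * k * (L2norm (fun x => Vt x - Yt x) + L2norm (fun x => V x - Y x))) ∧
        (k ≤ k₀ →
          L2norm (fun x => Vt x - Yt x) ≤ (1 + C' * k) * L2norm (fun x => V x - Y x)) :=
  IMR_substep_stability_general b K hK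

end KdVSpec
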